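/- Let X be a real infinite-dimensional Banach space, m an even positive integer, 0 < q < 1, r ≥ 1, and suppose there is K > 0 with ‖P‖_{as(q;r)} ≤ K ‖P‖ for all continuous m-homogeneous polynomials P : X → ℝ. Then for all n and x_1, ..., x_n ∈ X, (∑_{j=1}^n ‖x_j‖^{mq/(1-q)})^{(1-q)/(mq)} ≤ K^{1/m} · sup_{φ ∈ B_{X*}} (∑_{j=1}^n |φ(x_j)|^r)^{1/r}. -/

import Mathlib

open scoped BigOperators

/-- The weak ℓ_r norm of a finite family in `X`: `sup_{‖φ‖ ≤ 1} (∑_j ‖φ(x_j)‖^r)^(1/r)`. -/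
noncomputable def weakNorm (𝕜 : Type*) [RCLike 𝕜] {X : Type*} [NormedAddCommGroup X]
    [NormedSpace 𝕜 X] (r : ℝ) {n : ℕ} (x : Fin n → X) : ℝ :=
  ⨆ φ : {φ : X →L[𝕜] 𝕜 // ‖φ‖ ≤ 1}, (∑ j, ‖(φ : X →L[𝕜] 𝕜) (x j)‖ ^ r) ^ (1 / r)

/-- A sequence `x` in `X` is weakly `r`-summable if `(φ(x_j))_j ∈ ℓ_r` for every `φ ∈ X*`. -/
def WeaklySummable (𝕜 : Type*) [RCLike 𝕜] {X : Type*} [NormedAddCommGroup X]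
    [NormedSpace 𝕜 X] (r : ℝ) (x : ℕ → X) : Prop :=
  ∀ φ : X →L[𝕜] 𝕜, Summable fun j => ‖φ (x j)‖ ^ r

/-- `P : X → ℝ` is a continuous `m`-homogeneous polynomial. -/
def IsHomogPoly {X : Type*} [NormedAddCommGroup X] [NormedSpace ℝ X] (m : ℕ) (P : X → ℝ) :
    Prop :=
  ∃ A : ContinuousMultilinearMap ℝ (fun _ : Fin m => X) ℝ, ∀ x, P x = A (fun _ => x)

/-- The sup norm of `P` over the closed unit ball. -/
noncomputable def polyNorm {X : Type*} [NormedAddCommGroup X] (P : X → ℝ) : ℝ :=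
  ⨆ x : {x : X // ‖x‖ ≤ 1}, ‖P (x : X)‖

/-!
Given `x_1, …, x_n`, pick norming functionals `φ_j` (`‖φ_j‖ ≤ 1`, `φ_j(x_j) = ‖x_j‖`) and test the
hypothesis on `P(y) = ∑_j ‖x_j‖^α φ_j(y)^m` with `α = mq/(1-q)`. Since `m` is even every summand
is nonnegative, so `P(x_k) ≥ ‖x_k‖^(α+m)` and, as `(α + m) q = α`, `∑_k |P(x_k)|^q ≥ S := ∑_k ‖x_k‖^α`;
on the other hand `‖P‖ ≤ S`. Hence `S^(1/q) ≤ K S ‖(x_j)‖_{w,r}^m`; dividing by `S` and taking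
`m`-th roots gives the claim.
-/

theorem weakNorm_nonneg (𝕜 : Type*) [RCLike 𝕜] {X : Type*} [NormedAddCommGroup X]
    [NormedSpace 𝕜 X] (r : ℝ) {n : ℕ} (x : Fin n → X) : 0 ≤ weakNorm 𝕜 r x :=
  Real.iSup_nonneg fun _ => Real.rpow_nonneg (Finset.sum_nonneg fun _ _ => by positivity) _

theorem polyNorm_le {X : Type*} [NormedAddCommGroup X] {P : X → ℝ} {C : ℝ}
    (hP : ∀ y : X, ‖y‖ ≤ 1 → ‖P y‖ ≤ C) : polyNorm P ≤ C :=
  have : Nonempty {y : X // ‖y‖ ≤ 1} := ⟨⟨0, by simp⟩⟩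
  ciSup_le fun y => hP y y.2

section PowerSumPoly

variable {X : Type*} [NormedAddCommGroup X] [NormedSpace ℝ X] {ι : Type*} [Fintype ι]

def powerSumPoly (m : ℕ) (c : ι → ℝ) (φ : ι → X →L[ℝ] ℝ) (y : X) : ℝ :=
  ∑ j, c j * φ j y ^ m

theorem isHomogPoly_powerSumPoly (m : ℕ) (c : ι → ℝ) (φ : ι → X →L[ℝ] ℝ) :
    IsHomogPoly m (powerSumPoly m c φ) :=
  ⟨∑ j, c j • (ContinuousMultilinearMap.mkPiAlgebra ℝ (Fin m) ℝ).compContinuousLinearMap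
      fun _ => φ j, fun y => by simp [powerSumPoly]⟩

variable {m : ℕ} {c : ι → ℝ} {φ : ι → X →L[ℝ] ℝ}

theorem single_le_powerSumPoly (hm : Even m) (hc : ∀ j, 0 ≤ c j) (k : ι) (y : X) :
    c k * φ k y ^ m ≤ powerSumPoly m c φ y :=
  Finset.single_le_sum (f := fun j => c j * φ j y ^ m)
    (fun j _ => mul_nonneg (hc j) (hm.pow_nonneg _)) (Finset.mem_univ k)

theorem polyNorm_powerSumPoly_le (hc : ∀ j, 0 ≤ c j) (hφ : ∀ j, ‖φ j‖ ≤ 1) :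
    polyNorm (powerSumPoly m c φ) ≤ ∑ j, c j := by
  refine polyNorm_le fun y hy => (norm_sum_le _ _).trans (Finset.sum_le_sum fun j _ => ?_)
  have hφy : ‖φ j y‖ ≤ 1 := by
    simpa using (φ j).le_opNorm y |>.trans (mul_le_one₀ (hφ j) (norm_nonneg y) hy)
  rw [norm_mul, norm_pow, Real.norm_of_nonneg (hc j)]
  exact mul_le_of_le_one_right (hc j) (pow_le_one₀ (norm_nonneg _) hφy)

end PowerSumPoly

theorem rpow_eq_mul_pow_rpow {t α q : ℝ} {m : ℕ} (ht : 0 ≤ t) (hα : 0 ≤ α)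
    (hexp : (α + m) * q = α) : t ^ α = (t ^ α * t ^ m) ^ q := by
  rw [← Real.rpow_natCast, ← Real.rpow_add_of_nonneg ht hα (Nat.cast_nonneg m),
    ← Real.rpow_mul ht, hexp]

theorem rpow_sub_one_le_of_rpow_le_mul_self {S p B : ℝ} (hS : 0 < S) (h : S ^ p ≤ B * S) :
    S ^ (p - 1) ≤ B := by
  rwa [Real.rpow_sub_one hS.ne', div_le_iff₀ hS]

theorem rpow_le_of_rpow_one_div_le_mul_self {S q K W : ℝ} {m : ℕ} (hS : 0 < S) (hq : q ≠ 0)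
    (hm : 0 < m) (hK : 0 ≤ K) (hW : 0 ≤ W) (h : S ^ (1 / q) ≤ K * W ^ m * S) :
    S ^ ((1 - q) / (m * q)) ≤ K ^ ((1 : ℝ) / m) * W := calc
  S ^ ((1 - q) / (m * q)) = (S ^ (1 / q - 1)) ^ ((1 : ℝ) / m) := by
    rw [← Real.rpow_mul hS.le]; congr 1; field_simp
  _ ≤ (K * W ^ m) ^ ((1 : ℝ) / m) :=
    Real.rpow_le_rpow (by positivity) (rpow_sub_one_le_of_rpow_le_mul_self hS h) (by positivity)
  _ = K ^ ((1 : ℝ) / m) * W := by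
    rw [Real.mul_rpow hK (by positivity), one_div, Real.pow_rpow_inv_natCast hW hm.ne']

theorem stmt10_general {X : Type*} [NormedAddCommGroup X] [NormedSpace ℝ X]
    (m : ℕ) (hm : 0 < m) (hmeven : Even m)
    (q r K : ℝ) (hq0 : 0 < q) (hq1 : q < 1) (hK : 0 < K)
    (hsum : ∀ P : X → ℝ, IsHomogPoly m P → ∀ (n : ℕ) (x : Fin n → X),
      (∑ j, ‖P (x j)‖ ^ q) ^ (1 / q) ≤ K * polyNorm P * (weakNorm ℝ r x) ^ m) :
    ∀ (n : ℕ) (x : Fin n → X),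
      (∑ j, ‖x j‖ ^ (m * q / (1 - q))) ^ ((1 - q) / (m * q)) ≤
        K ^ ((1 : ℝ) / m) * weakNorm ℝ r x := by
  intro n x
  set α : ℝ := m * q / (1 - q)
  set S : ℝ := ∑ j, ‖x j‖ ^ α
  set W : ℝ := weakNorm ℝ r x
  have hα : 0 < α := div_pos (by positivity) (sub_pos.2 hq1)
  have hexp : (α + m) * q = α := by
    simp only [α]; field_simp [(sub_pos.2 hq1).ne']; ring
  have hW : 0 ≤ W := weakNorm_nonneg ℝ r x
  obtain hS | hS : S = 0 ∨ 0 < S := (Finset.sum_nonneg fun _ _ => by positivity).eq_or_lt'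
  · rw [hS, Real.zero_rpow (by positivity)]
    positivity
  choose φ hφ hφx using fun j => exists_dual_vector'' ℝ (x j)
  set c : Fin n → ℝ := fun j => ‖x j‖ ^ α
  have hc : ∀ j, 0 ≤ c j := fun j => by positivity
  set P := powerSumPoly m c φ
  have hlow : ∀ k, ‖x k‖ ^ α ≤ ‖P (x k)‖ ^ q := fun k => by
    rw [rpow_eq_mul_pow_rpow (norm_nonneg _) hα.le hexp]
    refine Real.rpow_le_rpow (by positivity) ?_ hq0.le
    simpa [c, hφx k] using
      (single_le_powerSumPoly (φ := φ) hmeven hc k (x k)).trans (le_abs_self _)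
  have hmain : S ^ (1 / q) ≤ K * W ^ m * S := calc
    S ^ (1 / q) ≤ (∑ j, ‖P (x j)‖ ^ q) ^ (1 / q) :=
      Real.rpow_le_rpow hS.le (Finset.sum_le_sum fun j _ => hlow j) (by positivity)
    _ ≤ K * polyNorm P * W ^ m := hsum P (isHomogPoly_powerSumPoly m c φ) n x
    _ ≤ K * S * W ^ m := by gcongr; exact polyNorm_powerSumPoly_le hc hφ
    _ = K * W ^ m * S := by ring
  exact rpow_le_of_rpow_one_div_le_mul_self hS hq0.ne' hm hK.le hW hmain

/-- If `‖P‖_{as(q;r)} ≤ K‖P‖` uniformly over continuous `m`-homogeneous real polynomials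
(`m` even), then `(∑‖x_j‖^{mq/(1-q)})^{(1-q)/(mq)} ≤ K^{1/m}·‖(x_j)‖_{w,r}`. -/
theorem stmt10 {X : Type*} [NormedAddCommGroup X] [NormedSpace ℝ X] [CompleteSpace X]
    (hdim : ¬ FiniteDimensional ℝ X) (m : ℕ) (hm : 0 < m) (hmeven : Even m)
    (q r K : ℝ) (hq0 : 0 < q) (hq1 : q < 1) (hr : 1 ≤ r) (hK : 0 < K)
    (hsum : ∀ P : X → ℝ, IsHomogPoly m P → ∀ (n : ℕ) (x : Fin n → X),
      (∑ j, ‖P (x j)‖ ^ q) ^ (1 / q) ≤ K * polyNorm P * (weakNorm ℝ r x) ^ m) :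
    ∀ (n : ℕ) (x : Fin n → X),
      (∑ j, ‖x j‖ ^ (m * q / (1 - q))) ^ ((1 - q) / (m * q)) ≤
        K ^ ((1 : ℝ) / m) * weakNorm ℝ r x :=
  stmt10_general m hm hmeven q r K hq0 hq1 hK hsum
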